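/- Let φ be a subharmonic function on ℂ with Δφ a doubling measure, and let ρ(z) be the positive radius with Δφ(D(z,ρ(z))) = 1. If the disks D(z) = D(z, ρ(z)) and D(ζ) = D(ζ, ρ(ζ)) intersect, then ρ(z) and ρ(ζ) are comparable: c ρ(ζ) ≤ ρ(z) ≤ C ρ(ζ) with constants c, C > 0 depending only on the doubling constant of Δφ. -/

import Mathlib

open MeasureTheory Metric Complex Filter

noncomputable section

/-- Pointwise Laplacian of a function on `ℂ ≃ ℝ²`. -/
def lap (f : ℂ → ℝ) (z : ℂ) : ℝ :=
  iteratedFDeriv ℝ 2 f z ![1, 1] + iteratedFDeriv ℝ 2 f z ![Complex.I, Complex.I]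

/-- `φ` is subharmonic on `ℂ`: upper semicontinuous, locally integrable, and satisfies
the sub-mean value inequality on disks. -/
def Subharmonic (φ : ℂ → ℝ) : Prop :=
  UpperSemicontinuous φ ∧ LocallyIntegrable φ volume ∧
    ∀ z : ℂ, ∀ r : ℝ, 0 < r → φ z ≤ ⨍ w in ball z r, φ w ∂volume

/-- `μ` is the distributional Laplacian of `φ`. -/
def IsLaplacianOf (μ : Measure ℂ) (φ : ℂ → ℝ) : Prop :=
  ∀ ψ : ℂ → ℝ, ContDiff ℝ (⊤ : ℕ∞) ψ → HasCompactSupport ψ →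
    ∫ z : ℂ, lap ψ z * φ z = ∫ z : ℂ, ψ z ∂μ

/-- `μ` is doubling with doubling constant (at most) `Cd`. -/
def DoublingWith (μ : Measure ℂ) (Cd : ℝ) : Prop :=
  ∀ z : ℂ, ∀ r : ℝ, 0 < r → μ (ball z (2 * r)) ≤ ENNReal.ofReal Cd * μ (ball z r)

/-- `ρ z` is the positive radius such that `μ (D(z, ρ z)) = 1`. -/
def IsRadiusFn (μ : Measure ℂ) (ρ : ℂ → ℝ) : Prop :=
  ∀ z : ℂ, 0 < ρ z ∧ μ (ball z (ρ z)) = 1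

/-! The doubling property of `μ` forces reverse doubling on `ℂ`: the annulus between radii `r`
and `2r` contains a disk of radius `r / 2` whose eight-fold dilate covers `D(x, r)`, so
`μ (D(x, 2r)) ≥ (1 + Cd⁻³) μ (D(x, r))`. If `D(z)` and `D(ζ)` meet and `ρ(z) > 2^(k+1) ρ(ζ)`,
then `D(ζ, 2^k ρ(ζ)) ⊆ D(z, 2ρ(z))`, and comparing the masses gives
`(1 + Cd⁻³)^k ≤ μ (D(z, 2ρ(z))) ≤ Cd`, which fails for `k` large. -/

namespace DoublingWith

variable {μ : Measure ℂ} {Cd : ℝ}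

theorem mono {Cd' : ℝ} (hD : DoublingWith μ Cd) (hle : Cd ≤ Cd') : DoublingWith μ Cd' :=
  fun x r hr => (hD x r hr).trans (by gcongr)

theorem measure_ball_two_pow_mul_le (hD : DoublingWith μ Cd) (x : ℂ) {r : ℝ} (hr : 0 < r)
    (n : ℕ) : μ (ball x (2 ^ n * r)) ≤ ENNReal.ofReal Cd ^ n * μ (ball x r) := by
  induction n with
  | zero => simp
  | succ n ih =>
    calc μ (ball x (2 ^ (n + 1) * r)) = μ (ball x (2 * (2 ^ n * r))) := by ring_nf
      _ ≤ ENNReal.ofReal Cd * μ (ball x (2 ^ n * r)) := hD x _ (by positivity)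
      _ ≤ ENNReal.ofReal Cd * (ENNReal.ofReal Cd ^ n * μ (ball x r)) := by gcongr
      _ = ENNReal.ofReal Cd ^ (n + 1) * μ (ball x r) := by ring

theorem reverse_doubling (hD : DoublingWith μ Cd) (hCd : 0 < Cd) (x : ℂ) {r : ℝ} (hr : 0 < r) :
    ENNReal.ofReal (1 + Cd⁻¹ ^ 3) * μ (ball x r) ≤ μ (ball x (2 * r)) := by
  set y : ℂ := x + ((3 * r / 2 : ℝ) : ℂ)
  have hxy : dist x y = 3 * r / 2 := by
    simp [y, abs_of_pos hr]
  have hdisj : Disjoint (ball x r) (ball y (r / 2)) :=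
    ball_disjoint_ball (by linarith)
  have hy_sub : ball y (r / 2) ⊆ ball x (2 * r) :=
    ball_subset_ball' (by rw [dist_comm, hxy]; linarith)
  have hx_sub : ball x r ⊆ ball y (2 ^ 3 * (r / 2)) :=
    ball_subset_ball' (by rw [hxy]; linarith)
  have hsmall : ENNReal.ofReal (Cd⁻¹ ^ 3) * μ (ball x r) ≤ μ (ball y (r / 2)) := by
    have hCd' : ENNReal.ofReal Cd ^ 3 ≠ 0 := by simp [hCd]
    calc ENNReal.ofReal (Cd⁻¹ ^ 3) * μ (ball x r)
        ≤ (ENNReal.ofReal Cd ^ 3)⁻¹ * (ENNReal.ofReal Cd ^ 3 * μ (ball y (r / 2))) := by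
          rw [inv_pow, ENNReal.ofReal_inv_of_pos (by positivity), ENNReal.ofReal_pow hCd.le]
          gcongr
          exact (measure_mono hx_sub).trans (hD.measure_ball_two_pow_mul_le y (by positivity) 3)
      _ = μ (ball y (r / 2)) := by
          rw [← mul_assoc, ENNReal.inv_mul_cancel hCd' (by simp), one_mul]
  calc ENNReal.ofReal (1 + Cd⁻¹ ^ 3) * μ (ball x r)
      = μ (ball x r) + ENNReal.ofReal (Cd⁻¹ ^ 3) * μ (ball x r) := by
        rw [ENNReal.ofReal_add zero_le_one (by positivity), ENNReal.ofReal_one, add_mul, one_mul]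
    _ ≤ μ (ball x r) + μ (ball y (r / 2)) := by gcongr
    _ = μ (ball x r ∪ ball y (r / 2)) := (measure_union hdisj measurableSet_ball).symm
    _ ≤ μ (ball x (2 * r)) :=
        measure_mono (Set.union_subset (ball_subset_ball (by linarith)) hy_sub)

theorem reverse_doubling_pow (hD : DoublingWith μ Cd) (hCd : 0 < Cd) (x : ℂ) {r : ℝ}
    (hr : 0 < r) (n : ℕ) :
    ENNReal.ofReal ((1 + Cd⁻¹ ^ 3) ^ n) * μ (ball x r) ≤ μ (ball x (2 ^ n * r)) := by
  induction n with
  | zero => simp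
  | succ n ih =>
    calc ENNReal.ofReal ((1 + Cd⁻¹ ^ 3) ^ (n + 1)) * μ (ball x r)
        = ENNReal.ofReal (1 + Cd⁻¹ ^ 3) * (ENNReal.ofReal ((1 + Cd⁻¹ ^ 3) ^ n) * μ (ball x r)) := by
          rw [pow_succ', ENNReal.ofReal_mul (by positivity), mul_assoc]
      _ ≤ ENNReal.ofReal (1 + Cd⁻¹ ^ 3) * μ (ball x (2 ^ n * r)) := by gcongr
      _ ≤ μ (ball x (2 * (2 ^ n * r))) := hD.reverse_doubling hCd x (by positivity)
      _ = μ (ball x (2 ^ (n + 1) * r)) := by ring_nf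

end DoublingWith

theorem IsRadiusFn.le_two_pow_mul_of_inter_nonempty {μ : Measure ℂ} {ρ : ℂ → ℝ} {Cd : ℝ}
    {k : ℕ} (hρ : IsRadiusFn μ ρ) (hD : DoublingWith μ Cd) (hCd : 0 < Cd)
    (hk : Cd < (1 + Cd⁻¹ ^ 3) ^ k) {z ζ : ℂ} (h : (ball z (ρ z) ∩ ball ζ (ρ ζ)).Nonempty) :
    ρ z ≤ 2 ^ (k + 1) * ρ ζ := by
  by_contra! hlarge
  obtain ⟨hz_pos, hz_mass⟩ := hρ z
  obtain ⟨hζ_pos, hζ_mass⟩ := hρ ζ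
  obtain ⟨w, hwz, hwζ⟩ := h
  have hdist : dist ζ z < ρ z + ρ ζ := by
    linarith [dist_triangle_left ζ z w, mem_ball.mp hwz, mem_ball.mp hwζ]
  have hsub : ball ζ (2 ^ k * ρ ζ) ⊆ ball z (2 * ρ z) := by
    refine ball_subset_ball' ?_
    have : ρ ζ ≤ 2 ^ k * ρ ζ := le_mul_of_one_le_left hζ_pos.le (one_le_pow₀ one_le_two)
    linarith [show (2 : ℝ) ^ (k + 1) * ρ ζ = 2 * (2 ^ k * ρ ζ) by ring]
  have hmass : ENNReal.ofReal ((1 + Cd⁻¹ ^ 3) ^ k) ≤ ENNReal.ofReal Cd :=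
    calc ENNReal.ofReal ((1 + Cd⁻¹ ^ 3) ^ k)
        = ENNReal.ofReal ((1 + Cd⁻¹ ^ 3) ^ k) * μ (ball ζ (ρ ζ)) := by rw [hζ_mass, mul_one]
      _ ≤ μ (ball ζ (2 ^ k * ρ ζ)) := hD.reverse_doubling_pow hCd ζ hζ_pos k
      _ ≤ μ (ball z (2 * ρ z)) := measure_mono hsub
      _ ≤ ENNReal.ofReal Cd * μ (ball z (ρ z)) := hD z _ hz_pos
      _ = ENNReal.ofReal Cd := by rw [hz_mass, mul_one]
  exact hk.not_ge ((ENNReal.ofReal_le_ofReal_iff hCd.le).mp hmass)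

/-- if the disks `D(z, ρ(z))` and `D(ζ, ρ(ζ))` intersect then
`ρ(z) ∼ ρ(ζ)`, with constants depending only on the doubling constant of `Δφ`. -/
theorem rho_comparable_of_disks_intersect :
    ∀ Cd : ℝ, ∃ c C : ℝ, 0 < c ∧ 0 < C ∧
      ∀ (φ : ℂ → ℝ) (μ : Measure ℂ) (ρ : ℂ → ℝ),
        Subharmonic φ → IsLaplacianOf μ φ → DoublingWith μ Cd → IsRadiusFn μ ρ →
        ∀ z ζ : ℂ, (ball z (ρ z) ∩ ball ζ (ρ ζ)).Nonempty →
          c * ρ ζ ≤ ρ z ∧ ρ z ≤ C * ρ ζ := by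
  intro Cd
  set K := max Cd 1
  have hK : 0 < K := lt_max_of_lt_right one_pos
  obtain ⟨k, hk⟩ := pow_unbounded_of_one_lt K (lt_add_of_pos_right 1 (by positivity : 0 < K⁻¹ ^ 3))
  have hC : (0 : ℝ) < 2 ^ (k + 1) := by positivity
  refine ⟨(2 ^ (k + 1))⁻¹, 2 ^ (k + 1), inv_pos.mpr hC, hC, ?_⟩
  intro φ μ ρ _ _ hD hρ z ζ h
  have hDK : DoublingWith μ K := hD.mono (le_max_left _ _)
  refine ⟨?_, hρ.le_two_pow_mul_of_inter_nonempty hDK hK hk h⟩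
  rw [inv_mul_le_iff₀ hC]
  exact hρ.le_two_pow_mul_of_inter_nonempty hDK hK hk (Set.inter_comm _ _ ▸ h)
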